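/- An infinite set of inequality clauses over a fixed finite set of integer terms, closed in the sense above, is logically equivalent to a finite subset: Let s, t : Fin n → ℤ and let Q be any set of tuples in (Fin n → ℕ). Then there is a finite subset Q' ⊆ Q such that for every k ∈ Q there is k' ∈ Q' with (∃ l, s l < t l + k' l) → (∃ l, s l < t l + k l); equivalently, the conjunction over Q of the clauses C(k) is equivalent to the conjunction over Q' of the clauses C(k'). -/

import Mathlib

/-!
Whether `C(k)` holds only improves as `k` grows, so the conjunction over `Q` is already implied
by the conjunction over the minimal elements of `Q`. These form an antichain of
`Fin n → ℕ`, which is finite by Dickson's lemma.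
-/

namespace Set

variable {α : Type*} [PartialOrder α]

theorem IsPWO.finite_setOf_minimal {Q : Set α} (hQ : Q.IsPWO) :
    {x | Minimal (· ∈ Q) x}.Finite :=
  (setOfPred_minimal_antichain _).finite_of_partiallyWellOrderedOn
    (hQ.mono (setOfPred_minimal_subset Q))

theorem IsPWO.exists_finite_subset_forall_iff_of_monotone {P : α → Prop} (hP : Monotone P)
    {Q : Set α} (hQ : Q.IsPWO) :
    ∃ Q' ⊆ Q, Q'.Finite ∧ ((∀ x ∈ Q', P x) ↔ ∀ x ∈ Q, P x) := by
  refine ⟨_, setOfPred_minimal_subset Q, hQ.finite_setOf_minimal,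
    fun h x hx => ?_, fun h x hx => h x hx.1⟩
  obtain ⟨m, hmx, hm⟩ := hQ.exists_le_minimal hx
  exact hP hmx (h m hm)

end Set

theorem monotone_exists_lt_add (n : ℕ) (s t : Fin n → ℤ) :
    Monotone fun k : Fin n → ℕ => ∃ l, s l < t l + (k l : ℤ) := by
  rintro k k' hkk' ⟨l, hl⟩
  have : k l ≤ k' l := hkk' l
  exact ⟨l, by omega⟩

theorem stmt10 (n : ℕ) (s t : Fin n → ℤ) (Q : Set (Fin n → ℕ)) :
    ∃ Q' ⊆ Q, Q'.Finite ∧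
      ((∀ k' ∈ Q', ∃ l, s l < t l + (k' l : ℤ)) ↔
       (∀ k ∈ Q, ∃ l, s l < t l + (k l : ℤ))) :=
  (Set.isPWO_of_wellQuasiOrderedLE Q).exists_finite_subset_forall_iff_of_monotone
    (monotone_exists_lt_add n s t)
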